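/- Let K be a number field, 𝔭 a nonzero prime ideal of its ring of integers, ν_𝔭 the normalized 𝔭-adic additive valuation on K, and let t ∈ K with ν_𝔭(t) = −k for some integer k > 0. Then the rational expressions j₁ = S₄(t)³/(S₁(t)·S₃(t)²⁵), j₂ = S₁₀(t)³·S₁₁(t)³·S₁₂(t)³/(S₁(t)⁵·S₃(t)⁵), and j₃ = S₇(t)³/(S₁(t)·S₃(t)) are defined (all factors in the denominators are nonzero) and satisfy ν_𝔭(j₁) = −k, ν_𝔭(j₂) = −5k, and ν_𝔭(j₃) = −25k. -/

import Mathlib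

noncomputable section

open IsDedekindDomain NumberField

/-- The polynomial `S1`. -/
def S1 {K : Type*} [Field K] (t : K) : K := t ^ 4 + t ^ 3 + 6 * t ^ 2 + 6 * t + 11

/-- The polynomial `S3`. -/
def S3 {K : Type*} [Field K] (t : K) : K := t - 1

/-- The polynomial `S4`. -/
def S4 {K : Type*} [Field K] (t : K) : K := t ^ 10 + 240 * t ^ 9 + 2170 * t ^ 8 + 8880 * t ^ 7 + 34835 * t ^ 6 + 83748 * t ^ 5 + 206210 * t ^ 4 + 313380 * t ^ 3 + 503545 * t ^ 2 + 424740 * t + 375376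

/-- The polynomial `S7`. -/
def S7 {K : Type*} [Field K] (t : K) : K := t ^ 10 + 10 * t ^ 8 + 35 * t ^ 6 - 12 * t ^ 5 + 50 * t ^ 4 - 60 * t ^ 3 + 25 * t ^ 2 - 60 * t + 16

/-- The polynomial `S10`. -/
def S10 {K : Type*} [Field K] (t : K) : K := t ^ 2 + 3 * t + 1

/-- The polynomial `S11`. -/
def S11 {K : Type*} [Field K] (t : K) : K := t ^ 4 - 4 * t ^ 3 + 11 * t ^ 2 - 14 * t + 31

/-- The polynomial `S12`. -/
def S12 {K : Type*} [Field K] (t : K) : K := t ^ 4 + t ^ 3 + 11 * t ^ 2 - 4 * t + 16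

open scoped Classical in
/-- The normalized `𝔭`-adic additive valuation on `K`, extended by `nu v 0 = 0`. -/
def nu {K : Type*} [Field K] [NumberField K]
    (v : HeightOneSpectrum (𝓞 K)) (x : K) : ℤ :=
  if hx : x = 0 then 0
  else -Multiplicative.toAdd (WithZero.unzero ((v.valuation K).ne_zero_iff.mpr hx))

/-! If `ν_𝔭(t) = -k < 0` then `|t|_𝔭 > 1`, so in a monic integer polynomial evaluated at `t` the
leading term strictly dominates: `|P(t)|_𝔭 = |t|_𝔭 ^ deg P`. The valuations of the `jᵢ` are thus
read off from degrees: `3·10 - 4 - 25 = 1`, `3·(2 + 4 + 4) - 5·4 - 5 = 5` and `3·10 - 4 - 1 = 25`. -/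

open Polynomial WithZero

namespace Valuation

variable {R Γ₀ : Type*} [Ring R] [LinearOrderedCommGroupWithZero Γ₀] (v : Valuation R Γ₀)

theorem map_intCast_le_one (n : ℤ) : v n ≤ 1 := by
  induction n using Int.induction_on with
  | zero => simp
  | succ n ih => simpa using v.map_add_le ih v.map_one.le
  | pred n ih => simpa using v.map_sub_le ih v.map_one.le

theorem map_aeval_of_monic {t : R} (ht : 1 < v t) {p : ℤ[X]} (hp : p.Monic) :
    v (aeval t p) = v t ^ p.natDegree := by
  have hlower : v (∑ i ∈ Finset.range p.natDegree, (p.coeff i : R) * t ^ i) < v t ^ p.natDegree := by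
    refine v.map_sum_lt (pow_ne_zero _ (zero_lt_one.trans ht).ne') fun i hi => ?_
    calc v ((p.coeff i : R) * t ^ i) ≤ v t ^ i := by
          rw [map_mul, map_pow]; exact mul_le_of_le_one_left' (v.map_intCast_le_one _)
      _ < v t ^ p.natDegree := pow_lt_pow_right₀ ht (Finset.mem_range.mp hi)
  rw [← map_pow] at hlower ⊢
  conv_lhs => rw [hp.as_sum]
  simpa using v.map_add_eq_of_lt_left hlower

theorem map_eq_pow_of_eq_aeval_monic {t x : R} (ht : 1 < v t) {p : ℤ[X]} {n : ℕ}
    (hx : x = aeval t p) (hp : p.Monic) (hn : p.natDegree = n) : v x = v t ^ n := by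
  rw [hx, v.map_aeval_of_monic ht hp, hn]

end Valuation

section

variable {K Γ₀ : Type*} [Field K] [LinearOrderedCommGroupWithZero Γ₀] (v : Valuation K Γ₀) {t : K}

theorem valuation_S1 (ht : 1 < v t) : v (S1 t) = v t ^ 4 :=
  v.map_eq_pow_of_eq_aeval_monic ht (p := X ^ 4 + X ^ 3 + 6 * X ^ 2 + 6 * X + 11)
    (by simp [S1, map_ofNat]) (by monicity!) (by compute_degree!)

theorem valuation_S3 (ht : 1 < v t) : v (S3 t) = v t :=
  pow_one (v t) ▸ v.map_eq_pow_of_eq_aeval_monic ht (p := X - 1)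
    (by simp [S3]) (by monicity!) (by compute_degree!)

theorem valuation_S4 (ht : 1 < v t) : v (S4 t) = v t ^ 10 :=
  v.map_eq_pow_of_eq_aeval_monic ht
    (p := X ^ 10 + 240 * X ^ 9 + 2170 * X ^ 8 + 8880 * X ^ 7 + 34835 * X ^ 6 + 83748 * X ^ 5
      + 206210 * X ^ 4 + 313380 * X ^ 3 + 503545 * X ^ 2 + 424740 * X + 375376)
    (by simp [S4, map_ofNat]) (by monicity!) (by compute_degree!)

theorem valuation_S7 (ht : 1 < v t) : v (S7 t) = v t ^ 10 :=
  v.map_eq_pow_of_eq_aeval_monic ht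
    (p := X ^ 10 + 10 * X ^ 8 + 35 * X ^ 6 - 12 * X ^ 5 + 50 * X ^ 4 - 60 * X ^ 3 + 25 * X ^ 2
      - 60 * X + 16)
    (by simp [S7, map_ofNat]) (by monicity!) (by compute_degree!)

theorem valuation_S10 (ht : 1 < v t) : v (S10 t) = v t ^ 2 :=
  v.map_eq_pow_of_eq_aeval_monic ht (p := X ^ 2 + 3 * X + 1)
    (by simp [S10, map_ofNat]) (by monicity!) (by compute_degree!)

theorem valuation_S11 (ht : 1 < v t) : v (S11 t) = v t ^ 4 :=
  v.map_eq_pow_of_eq_aeval_monic ht (p := X ^ 4 - 4 * X ^ 3 + 11 * X ^ 2 - 14 * X + 31)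
    (by simp [S11, map_ofNat]) (by monicity!) (by compute_degree!)

theorem valuation_S12 (ht : 1 < v t) : v (S12 t) = v t ^ 4 :=
  v.map_eq_pow_of_eq_aeval_monic ht (p := X ^ 4 + X ^ 3 + 11 * X ^ 2 - 4 * X + 16)
    (by simp [S12, map_ofNat]) (by monicity!) (by compute_degree!)

theorem valuation_j1 (ht : 1 < v t) : v (S4 t ^ 3 / (S1 t * S3 t ^ 25)) = v t := by
  simp only [map_div₀, map_mul, map_pow, valuation_S1 v ht, valuation_S3 v ht,
    valuation_S4 v ht, ← pow_mul, ← pow_add]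
  rw [div_eq_mul_inv, ← pow_sub₀ _ (zero_lt_one.trans ht).ne' (by norm_num)]
  norm_num

theorem valuation_j2 (ht : 1 < v t) :
    v (S10 t ^ 3 * S11 t ^ 3 * S12 t ^ 3 / (S1 t ^ 5 * S3 t ^ 5)) = v t ^ 5 := by
  simp only [map_div₀, map_mul, map_pow, valuation_S1 v ht, valuation_S3 v ht,
    valuation_S10 v ht, valuation_S11 v ht, valuation_S12 v ht, ← pow_mul, ← pow_add]
  rw [div_eq_mul_inv, ← pow_sub₀ _ (zero_lt_one.trans ht).ne' (by norm_num)]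

theorem valuation_j3 (ht : 1 < v t) : v (S7 t ^ 3 / (S1 t * S3 t)) = v t ^ 25 := by
  simp only [map_div₀, map_mul, map_pow, valuation_S1 v ht, valuation_S3 v ht,
    valuation_S7 v ht, ← pow_mul, ← pow_succ]
  rw [div_eq_mul_inv, ← pow_sub₀ _ (zero_lt_one.trans ht).ne' (by norm_num)]

end

theorem nu_eq_neg_log {K : Type*} [Field K] [NumberField K] (v : HeightOneSpectrum (𝓞 K))
    (x : K) : nu v x = -log (v.valuation K x) := by
  unfold nu
  split_ifs with hx
  · simp [hx]
  · rw [toAdd_unzero_eq_log]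

theorem stmt9 {K : Type*} [Field K] [NumberField K] (v : HeightOneSpectrum (𝓞 K))
    (t : K) (k : ℤ) (hk : 0 < k) (ht : nu v t = -k) :
    S1 t ≠ 0 ∧ S3 t ≠ 0 ∧
    nu v (S4 t ^ 3 / (S1 t * S3 t ^ 25)) = -k ∧
    nu v (S10 t ^ 3 * S11 t ^ 3 * S12 t ^ 3 / (S1 t ^ 5 * S3 t ^ 5)) = -(5 * k) ∧
    nu v (S7 t ^ 3 / (S1 t * S3 t)) = -(25 * k) := by
  have ht0 : t ≠ 0 := by
    rintro rfl
    simp [nu] at ht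
    omega
  have hvt : v.valuation K t = exp k := by
    rw [nu_eq_neg_log, neg_inj] at ht
    rw [← ht, exp_log ((v.valuation K).ne_zero_iff.mpr ht0)]
  have h1 : 1 < v.valuation K t := by rwa [hvt, ← exp_zero, exp_lt_exp]
  refine ⟨(v.valuation K).ne_zero_iff.mp ?_, (v.valuation K).ne_zero_iff.mp ?_, ?_, ?_, ?_⟩
  · simp [valuation_S1 _ h1, hvt]
  · simp [valuation_S3 _ h1, hvt]
  · rw [nu_eq_neg_log, valuation_j1 _ h1, hvt, log_exp]
  · rw [nu_eq_neg_log, valuation_j2 _ h1, hvt, ← exp_nsmul, log_exp, nsmul_eq_mul, Nat.cast_ofNat]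
  · rw [nu_eq_neg_log, valuation_j3 _ h1, hvt, ← exp_nsmul, log_exp, nsmul_eq_mul, Nat.cast_ofNat]
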